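/- Suppose (x*, τ*, r*) with x* > 0, τ* the Gibbs distribution τ_i(r*) = exp(β Σ_{l∈i} r*_l)/Σ_{i'} exp(β Σ_{l∈i'} r*_l), and r* ≥ 0 satisfies: (a) 1/(x*_s)² = Σ_{l∈s} r*_l for all s; (b) for all l, Σ_{s: l∈s} x*_s ≤ Σ_{i: l∈i} τ*_i, with equality whenever r*_l > 0. Then (x*, τ*) is an optimal solution of problem MP (maximize Σ_s −1/x_s − (1/β) Σ_i τ_i log τ_i subject to Σ_{s:l∈s} x_s ≤ Σ_{i:l∈i} τ_i, Σ_i τ_i = 1, x,τ ≥ 0). -/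

import Mathlib

open Finset Real

/-! Weak duality with the multipliers `r*`. For feasible `(x, τ)` and `r* ≥ 0`, the objective is
at most the Lagrangian `∑ₛ (-1/xₛ - cₛ xₛ) + ∑ᵢ (dᵢ τᵢ - β⁻¹ τᵢ log τᵢ)`, where `cₛ`, `dᵢ` are the
sums of `r*` over the links of flow `s` and of schedule `i`. The flow part is maximized termwise
at `xₛ = cₛ^(-1/2)`, i.e. at `x*` by (a), and the schedule part over the simplex at the Gibbs
distribution (Gibbs' variational principle). By complementary slackness the Lagrangian at
`(x*, τ*)` equals the objective there. -/

/-- The CSMA product-form (Gibbs) distribution. -/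
noncomputable def gibbs {E : Type*} [DecidableEq E] (I : Finset (Finset E)) (β : ℝ)
    (r : E → ℝ) (i : Finset E) : ℝ :=
  Real.exp (β * ∑ l ∈ i, r l) / ∑ i' ∈ I, Real.exp (β * ∑ l ∈ i', r l)

lemma neg_inv_sub_mul_le_of_pos {x y : ℝ} (hx : 0 < x) (hy : 0 < y) :
    -1 / x - 1 / y ^ 2 * x ≤ -1 / y - 1 / y ^ 2 * y := by
  have hgap : -1 / y - 1 / y ^ 2 * y - (-1 / x - 1 / y ^ 2 * x) = (x - y) ^ 2 / (x * y ^ 2) := by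
    field_simp
    ring
  rw [← sub_nonneg, hgap]
  positivity

lemma mul_log_sub_mul_log_le_sub {t q : ℝ} (ht : 0 ≤ t) (hq : 0 < q) :
    t * log q - t * log t ≤ q - t := by
  rcases ht.eq_or_lt with rfl | ht
  · simpa using hq.le
  · have h := mul_le_mul_of_nonneg_left (log_le_sub_one_of_pos (div_pos hq ht)) ht.le
    rw [log_div hq.ne' ht.ne', mul_sub, mul_sub, mul_div_cancel₀ _ ht.ne'] at h
    linarith

/-- Gibbs' variational principle; equality holds at the softmax of `a`. -/
lemma sum_mul_sub_sum_mul_log_le_log_sum_exp {ι : Type*} {I : Finset ι} {τ : ι → ℝ}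
    (hτ : ∀ i ∈ I, 0 ≤ τ i) (hτ1 : ∑ i ∈ I, τ i = 1) (a : ι → ℝ) :
    ∑ i ∈ I, τ i * a i - ∑ i ∈ I, τ i * log (τ i) ≤ log (∑ i ∈ I, exp (a i)) := by
  have hI : I.Nonempty := nonempty_of_sum_ne_zero (by rw [hτ1]; exact one_ne_zero)
  set Z := ∑ i ∈ I, exp (a i)
  have hZ : 0 < Z := sum_pos (fun i _ ↦ exp_pos _) hI
  have hterm : ∀ i ∈ I, τ i * (a i - log Z) - τ i * log (τ i) ≤ exp (a i) / Z - τ i := by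
    intro i hi
    have h := mul_log_sub_mul_log_le_sub (hτ i hi) (div_pos (exp_pos (a i)) hZ)
    rwa [log_div (exp_pos _).ne' hZ.ne', log_exp] at h
  have hsum := sum_le_sum hterm
  simp only [sum_sub_distrib, mul_sub, ← sum_mul, ← sum_div, hτ1] at hsum
  rw [div_self hZ.ne'] at hsum
  linarith

lemma sum_gibbs {E : Type*} [DecidableEq E] {I : Finset (Finset E)} (hI : I.Nonempty)
    (β : ℝ) (r : E → ℝ) : ∑ i ∈ I, gibbs I β r i = 1 := by
  simp only [gibbs, ← sum_div]
  exact div_self (sum_pos (fun i _ ↦ exp_pos _) hI).ne'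

lemma log_gibbs {E : Type*} [DecidableEq E] {I : Finset (Finset E)} (hI : I.Nonempty)
    (β : ℝ) (r : E → ℝ) (i : Finset E) :
    log (gibbs I β r i) = β * ∑ l ∈ i, r l - log (∑ i' ∈ I, exp (β * ∑ l ∈ i', r l)) := by
  rw [gibbs, log_div (exp_pos _).ne' (sum_pos (fun i _ ↦ exp_pos _) hI).ne', log_exp]

lemma sum_mul_sub_entropy_le_gibbs {E : Type*} [DecidableEq E] {I : Finset (Finset E)}
    {β : ℝ} (hβ : 0 < β) (r : E → ℝ) {τ : Finset E → ℝ} (hτ : ∀ i ∈ I, 0 ≤ τ i)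
    (hτ1 : ∑ i ∈ I, τ i = 1) :
    ∑ i ∈ I, (∑ l ∈ i, r l) * τ i - 1 / β * ∑ i ∈ I, τ i * log (τ i)
      ≤ ∑ i ∈ I, (∑ l ∈ i, r l) * gibbs I β r i
          - 1 / β * ∑ i ∈ I, gibbs I β r i * log (gibbs I β r i) := by
  have hI : I.Nonempty := nonempty_of_sum_ne_zero (by rw [hτ1]; exact one_ne_zero)
  set d : Finset E → ℝ := fun i ↦ ∑ l ∈ i, r l
  set p := gibbs I β r
  have hscale : ∀ σ : Finset E → ℝ, ∑ i ∈ I, σ i * (β * d i) = β * ∑ i ∈ I, d i * σ i := by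
    intro σ
    rw [mul_sum]
    exact sum_congr rfl fun i _ ↦ by ring
  have hvar := sum_mul_sub_sum_mul_log_le_log_sum_exp hτ hτ1 (fun i ↦ β * d i)
  have hp : ∑ i ∈ I, p i * (β * d i) - ∑ i ∈ I, p i * log (p i)
      = log (∑ i ∈ I, exp (β * d i)) := by
    simp only [p, log_gibbs hI, mul_sub, sum_sub_distrib, ← sum_mul, sum_gibbs hI]
    ring
  rw [hscale] at hvar hp
  calc ∑ i ∈ I, d i * τ i - 1 / β * ∑ i ∈ I, τ i * log (τ i)
      = 1 / β * (β * ∑ i ∈ I, d i * τ i - ∑ i ∈ I, τ i * log (τ i)) := by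
        field_simp
    _ ≤ 1 / β * (β * ∑ i ∈ I, d i * p i - ∑ i ∈ I, p i * log (p i)) := by
        gcongr 1 / β * ?_
        linarith
    _ = ∑ i ∈ I, d i * p i - 1 / β * ∑ i ∈ I, p i * log (p i) := by
        field_simp

section Pricing

variable {ι κ E : Type*} [DecidableEq E]

lemma sum_mul_sum_ite_mem {R : Type*} [NonUnitalNonAssocSemiring R] (J : Finset ι)
    (A : ι → Finset E) {T : Finset E} (hT : ∀ j ∈ J, A j ⊆ T) (r : E → R) (y : ι → R) :
    ∑ l ∈ T, r l * ∑ j ∈ J, (if l ∈ A j then y j else 0) = ∑ j ∈ J, (∑ l ∈ A j, r l) * y j := by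
  simp_rw [mul_sum, mul_ite, mul_zero]
  rw [sum_comm]
  refine sum_congr rfl fun j hj ↦ ?_
  rw [sum_ite_mem, inter_eq_right.mpr (hT j hj), sum_mul]

variable (J : Finset ι) (K : Finset κ) (A : ι → Finset E) (B : κ → Finset E)
  {r : E → ℝ} (y : ι → ℝ) (z : κ → ℝ)

lemma sum_price_mul_sub_sum_price_mul :
    ∑ k ∈ K, (∑ l ∈ B k, r l) * z k - ∑ j ∈ J, (∑ l ∈ A j, r l) * y j
      = ∑ l ∈ J.biUnion A ∪ K.biUnion B, r l *
          ((∑ k ∈ K, if l ∈ B k then z k else 0) - ∑ j ∈ J, if l ∈ A j then y j else 0) := by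
  have hA : ∀ j ∈ J, A j ⊆ J.biUnion A ∪ K.biUnion B :=
    fun j hj ↦ (subset_biUnion_of_mem A hj).trans subset_union_left
  have hB : ∀ k ∈ K, B k ⊆ J.biUnion A ∪ K.biUnion B :=
    fun k hk ↦ (subset_biUnion_of_mem B hk).trans subset_union_right
  simp only [mul_sub, sum_sub_distrib, sum_mul_sum_ite_mem J A hA, sum_mul_sum_ite_mem K B hB]

lemma sum_price_mul_le_of_load_le (hr : ∀ l, 0 ≤ r l)
    (hload : ∀ l, ∑ j ∈ J, (if l ∈ A j then y j else 0) ≤ ∑ k ∈ K, if l ∈ B k then z k else 0) :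
    ∑ j ∈ J, (∑ l ∈ A j, r l) * y j ≤ ∑ k ∈ K, (∑ l ∈ B k, r l) * z k := by
  rw [← sub_nonneg, sum_price_mul_sub_sum_price_mul]
  exact sum_nonneg fun l _ ↦ mul_nonneg (hr l) (sub_nonneg.mpr (hload l))

lemma sum_price_mul_eq_of_load_eq (hr : ∀ l, 0 ≤ r l)
    (hload : ∀ l, 0 < r l →
      ∑ j ∈ J, (if l ∈ A j then y j else 0) = ∑ k ∈ K, if l ∈ B k then z k else 0) :
    ∑ j ∈ J, (∑ l ∈ A j, r l) * y j = ∑ k ∈ K, (∑ l ∈ B k, r l) * z k := by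
  rw [← sub_eq_zero, sum_price_mul_sub_sum_price_mul]
  refine sum_eq_zero fun l _ ↦ ?_
  rcases (hr l).eq_or_lt with h | h
  · rw [← h, zero_mul]
  · rw [hload l h, sub_self, mul_zero]

end Pricing

theorem kkt_implies_MP_optimal_general {S E : Type*} [Fintype S] [DecidableEq E]
    (I : Finset (Finset E)) (route : S → Finset E)
    (β : ℝ) (hβ : 0 < β)
    (xstar : S → ℝ) (τstar : Finset E → ℝ) (rstar : E → ℝ)
    (hxpos : ∀ s, 0 < xstar s) (hrnn : ∀ l, 0 ≤ rstar l)
    (hτ : ∀ i, τstar i = gibbs I β rstar i)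
    (ha : ∀ s, 1 / (xstar s) ^ 2 = ∑ l ∈ route s, rstar l)
    (hcs : ∀ l : E, 0 < rstar l →
        (∑ s, if l ∈ route s then xstar s else 0)
          = ∑ i ∈ I.filter (fun i => l ∈ i), τstar i) :
    ∀ (x : S → ℝ) (τ : Finset E → ℝ), (∀ s, 0 < x s) → (∀ i ∈ I, 0 ≤ τ i) →
      (∑ i ∈ I, τ i = 1) →
      (∀ l : E, (∑ s, if l ∈ route s then x s else 0)
        ≤ ∑ i ∈ I.filter (fun i => l ∈ i), τ i) →
      (∑ s, -1 / x s) - (1 / β) * ∑ i ∈ I, τ i * Real.log (τ i)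
        ≤ (∑ s, -1 / xstar s) - (1 / β) * ∑ i ∈ I, τstar i * Real.log (τstar i) := by
  intro x τ hx hτnn hτ1 hfeas
  have hτstar : τstar = gibbs I β rstar := funext hτ
  have hpay : ∑ s, (∑ l ∈ route s, rstar l) * x s ≤ ∑ i ∈ I, (∑ l ∈ i, rstar l) * τ i :=
    sum_price_mul_le_of_load_le univ I route id x τ hrnn fun l ↦ by
      simpa only [sum_filter, id] using hfeas l
  have hpaystar :
      ∑ s, (∑ l ∈ route s, rstar l) * xstar s = ∑ i ∈ I, (∑ l ∈ i, rstar l) * τstar i :=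
    sum_price_mul_eq_of_load_eq univ I route id xstar τstar hrnn fun l hl ↦ by
      simpa only [sum_filter, id] using hcs l hl
  have hflows : ∑ s, (-1 / x s - (∑ l ∈ route s, rstar l) * x s)
      ≤ ∑ s, (-1 / xstar s - (∑ l ∈ route s, rstar l) * xstar s) :=
    sum_le_sum fun s _ ↦ ha s ▸ neg_inv_sub_mul_le_of_pos (hx s) (hxpos s)
  have hschedule := sum_mul_sub_entropy_le_gibbs hβ rstar hτnn hτ1
  rw [← hτstar] at hschedule
  simp only [sum_sub_distrib] at hflows
  linarith

/-- KKT sufficiency: if (x*, τ*, r*) satisfies the stationarity and complementary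
slackness conditions with τ* the Gibbs distribution, then (x*, τ*) is optimal for MP. -/
theorem kkt_implies_MP_optimal {S E : Type*} [Fintype S] [DecidableEq E]
    (I : Finset (Finset E)) (hI : I.Nonempty) (route : S → Finset E)
    (β : ℝ) (hβ : 0 < β)
    (xstar : S → ℝ) (τstar : Finset E → ℝ) (rstar : E → ℝ)
    (hxpos : ∀ s, 0 < xstar s) (hrnn : ∀ l, 0 ≤ rstar l)
    (hτ : ∀ i, τstar i = gibbs I β rstar i)
    (ha : ∀ s, 1 / (xstar s) ^ 2 = ∑ l ∈ route s, rstar l)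
    (hb : ∀ l : E, (∑ s, if l ∈ route s then xstar s else 0)
        ≤ ∑ i ∈ I.filter (fun i => l ∈ i), τstar i)
    (hcs : ∀ l : E, 0 < rstar l →
        (∑ s, if l ∈ route s then xstar s else 0)
          = ∑ i ∈ I.filter (fun i => l ∈ i), τstar i) :
    ∀ (x : S → ℝ) (τ : Finset E → ℝ), (∀ s, 0 < x s) → (∀ i ∈ I, 0 ≤ τ i) →
      (∑ i ∈ I, τ i = 1) →
      (∀ l : E, (∑ s, if l ∈ route s then x s else 0)
        ≤ ∑ i ∈ I.filter (fun i => l ∈ i), τ i) →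
      (∑ s, -1 / x s) - (1 / β) * ∑ i ∈ I, τ i * Real.log (τ i)
        ≤ (∑ s, -1 / xstar s) - (1 / β) * ∑ i ∈ I, τstar i * Real.log (τstar i) :=
  kkt_implies_MP_optimal_general I route β hβ xstar τstar rstar hxpos hrnn hτ ha hcs
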